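/- arXiv:2305.17978 — 8 statements merged into one kernel-verified Lean document; each statement's English description precedes it below -/
import Mathlib

section
/- The binary operation ⋆_A on probability vectors is associative if and only if for all a, j, k, l: Σ_i A_{ail} A_{ijk} = Σ_i A_{aji} A_{ikl}. -/
private lemma sum3_comm {N : ℕ} (f : Fin N → Fin N → Fin N → ℝ) :
    ∑ a, ∑ b, ∑ c, f a b c = ∑ b, ∑ c, ∑ a, f a b c := by
  rw [Finset.sum_comm]
  congr 1; funext b
  rw [Finset.sum_comm]

private lemma sum4_comm {N : ℕ} (f : Fin N → Fin N → Fin N → Fin N → ℝ) :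
    ∑ a, ∑ b, ∑ c, ∑ d, f a b c d = ∑ c, ∑ d, ∑ b, ∑ a, f a b c d := by
  calc ∑ a, ∑ b, ∑ c, ∑ d, f a b c d
      = ∑ b, ∑ c, ∑ a, ∑ d, f a b c d := sum3_comm (fun a b c => ∑ d, f a b c d)
    _ = ∑ b, ∑ c, ∑ d, ∑ a, f a b c d := by
        congr 1; funext b; congr 1; funext c; exact Finset.sum_comm
    _ = ∑ c, ∑ b, ∑ d, ∑ a, f a b c d := Finset.sum_comm
    _ = ∑ c, ∑ d, ∑ b, ∑ a, f a b c d := by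
        congr 1; funext c; exact Finset.sum_comm

/-- The bilinear product on vectors induced by a cubic tensor `A`:
`(p ⋆_A q)_i = Σ_{j,k} A_{ijk} p_j q_k`. -/
def conv {N : ℕ} (A : Fin N → Fin N → Fin N → ℝ) (p q : Fin N → ℝ) : Fin N → ℝ :=
  fun i => ∑ j, ∑ k, A i j k * p j * q k

theorem conv_assoc_iff {N : ℕ} (A : Fin N → Fin N → Fin N → ℝ)
    (hpos : ∀ i j k, 0 ≤ A i j k)
    (hstoch : ∀ j k, ∑ i, A i j k = 1) :
    (∀ p ∈ stdSimplex ℝ (Fin N), ∀ q ∈ stdSimplex ℝ (Fin N), ∀ r ∈ stdSimplex ℝ (Fin N),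
        conv A (conv A p q) r = conv A p (conv A q r)) ↔
      (∀ a j k l, ∑ i, A a i l * A i j k = ∑ i, A a j i * A i k l) := by
  constructor
  · intro h a j k l
    have hmem : ∀ m : Fin N, (Pi.single m 1 : Fin N → ℝ) ∈ stdSimplex ℝ (Fin N) := by
      intro m
      constructor
      · intro x; by_cases hx : x = m <;> simp [Pi.single_apply, hx]
      · simp [Pi.single_apply]
    have := congrFun (h _ (hmem j) _ (hmem k) _ (hmem l)) a
    simpa [conv, Pi.single_apply, mul_ite, ite_mul, Finset.sum_ite_eq, Finset.sum_ite_eq'] using this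
  · intro h p _ q _ r _
    funext a
    simp only [conv]
    calc (∑ i, ∑ l, A a i l * (∑ j, ∑ k, A i j k * p j * q k) * r l)
        = ∑ i, ∑ l, ∑ j, ∑ k, A a i l * A i j k * (p j * q k * r l) := by
          congr 1; funext i; congr 1; funext l
          simp only [Finset.sum_mul, Finset.mul_sum]
          congr 1; funext j; congr 1; funext k; ring
      _ = ∑ j, ∑ k, ∑ l, ∑ i, A a i l * A i j k * (p j * q k * r l) :=
          sum4_comm (fun i l j k => A a i l * A i j k * (p j * q k * r l))
      _ = ∑ j, ∑ k, ∑ l, ∑ i, A a j i * A i k l * (p j * q k * r l) := by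
          congr 1; funext j; congr 1; funext k; congr 1; funext l
          rw [← Finset.sum_mul, ← Finset.sum_mul, h]
      _ = ∑ j, ∑ i, ∑ k, ∑ l, A a j i * A i k l * (p j * q k * r l) := by
          congr 1; funext j
          exact (sum3_comm (fun i k l => A a j i * A i k l * (p j * q k * r l))).symm
      _ = ∑ j, ∑ i, A a j i * p j * ∑ k, ∑ l, A i k l * q k * r l := by
          congr 1; funext j; congr 1; funext i
          simp only [Finset.mul_sum]
          congr 1; funext k; congr 1; funext l; ring
end

section
/- Let A be an m-stochastic tensor with m ≥ 3, and q^(0) = α·e + (1−α)·p^(0) with α ∈ (0,1], e the uniform vector, and p^(0) a probability vector. Define q^(n+1) = A[q^(n),...,q^(n)]. Then q^(n) converges to e as n → ∞. -/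
open Finset

/-- An `m`-stochastic tensor of dimension `N`: all entries are nonnegative and
the sum over any single index (the others being fixed) equals `1`. -/
def MStochastic {N m : ℕ} (A : (Fin m → Fin N) → ℝ) : Prop :=
  (∀ f, 0 ≤ A f) ∧
    ∀ (t : Fin m) (f : Fin m → Fin N), ∑ v : Fin N, A (Function.update f t v) = 1

/-- The multilinear action of the tensor `A`, with output in slot `t` and the
probability vector `p s` fed into each input slot `s ≠ t`:
`A[p]_{i} = Σ_{g, g t = i} A_g · Π_{s ≠ t} (p s)_{g s}`. -/
def mAct {N m : ℕ} (A : (Fin m → Fin N) → ℝ) (t : Fin m) (p : Fin m → Fin N → ℝ) :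
    Fin N → ℝ :=
  fun i => ∑ g : Fin m → Fin N,
    if g t = i then A g * ∏ s ∈ Finset.univ.erase t, p s (g s) else 0

/-!
Take slot `0` as output and freeze every input slot except slot `1` at `q`: then
`A[q,…,q] = C(q) q` for a matrix `C(q)` that is doubly stochastic whenever `A` is stochastic
and `q` is a probability vector. Mixing with `e` gives `q⁽⁰⁾ ≥ α/N`; this bound survives each
step (`q⁽ⁿ⁺¹⁾` is an average of the entries of `q⁽ⁿ⁾`), and, summing out a third slot, it forces
every entry of `C(q⁽ⁿ⁾)` to be at least `(α/N)^m`. A doubly stochastic matrix with entries `≥ c`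
contracts zero-sum vectors in `ℓ¹` by the factor `1 - N c`, so `‖q⁽ⁿ⁾ - e‖₁` decays
geometrically.
-/

open Function

theorem Fintype.prod_update_apply {ι κ M : Type*} [Fintype ι] [DecidableEq ι] [CommMonoid M]
    (w : ι → κ → M) (t : ι) (u : κ → M) (g : ι → κ) :
    ∏ s, update w t u s (g s) = u (g t) * ∏ s ∈ univ.erase t, w s (g s) := by
  rw [← Finset.mul_prod_erase univ _ (mem_univ t), update_self]
  congr 1
  exact Finset.prod_congr rfl fun s hs => by rw [update_of_ne (ne_of_mem_erase hs)]

theorem sum_abs_sum_mul_le {ι : Type*} [Fintype ι] {C : ι → ι → ℝ} {c : ℝ}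
    (hc : ∀ i j, c ≤ C i j) (hcol : ∀ j, ∑ i, C i j = 1) {x : ι → ℝ} (hx : ∑ j, x j = 0) :
    ∑ i, |∑ j, C i j * x j| ≤ (1 - Fintype.card ι * c) * ∑ j, |x j| := by
  have hshift : ∀ i, ∑ j, C i j * x j = ∑ j, (C i j - c) * x j := by
    intro i
    simp only [sub_mul, Finset.sum_sub_distrib, ← Finset.mul_sum, hx, mul_zero, sub_zero]
  calc ∑ i, |∑ j, C i j * x j| ≤ ∑ i, ∑ j, (C i j - c) * |x j| := by
        refine Finset.sum_le_sum fun i _ => ?_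
        rw [hshift]
        refine (Finset.abs_sum_le_sum_abs _ _).trans_eq (Finset.sum_congr rfl fun j _ => ?_)
        rw [abs_mul, abs_of_nonneg (sub_nonneg.2 (hc i j))]
    _ = ∑ j, (∑ i, (C i j - c)) * |x j| := by
        rw [Finset.sum_comm]
        simp only [Finset.sum_mul]
    _ = (1 - Fintype.card ι * c) * ∑ j, |x j| := by
        simp only [Finset.sum_sub_distrib, hcol, Finset.sum_const, Finset.card_univ, nsmul_eq_mul,
          Finset.mul_sum]

theorem tendsto_pi_of_sum_abs_sub_le_mul {ι : Type*} [Fintype ι] {f : ℕ → ι → ℝ} {a : ι → ℝ}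
    {r : ℝ} (hr₀ : 0 ≤ r) (hr₁ : r < 1)
    (hf : ∀ n, ∑ i, |f (n + 1) i - a i| ≤ r * ∑ i, |f n i - a i|) :
    Filter.Tendsto f Filter.atTop (nhds a) := by
  have hgeom (n : ℕ) : ∑ i, |f n i - a i| ≤ r ^ n * ∑ i, |f 0 i - a i| :=
    le_geom (u := fun n => ∑ i, |f n i - a i|) hr₀ n fun k _ => hf k
  have hlim : Filter.Tendsto (fun n => r ^ n * ∑ i, |f 0 i - a i|) Filter.atTop (nhds 0) := by
    simpa using (tendsto_pow_atTop_nhds_zero_of_lt_one hr₀ hr₁).mul_const (∑ i, |f 0 i - a i|)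
  refine tendsto_pi_nhds.2 fun i => tendsto_iff_dist_tendsto_zero.2 ?_
  refine squeeze_zero (fun n => dist_nonneg) (fun n => ?_) hlim
  rw [Real.dist_eq]
  exact (Finset.single_le_sum (f := fun j => |f n j - a j|) (fun j _ => abs_nonneg _)
    (Finset.mem_univ i)).trans (hgeom n)

def tensorForm {N m : ℕ} (A : (Fin m → Fin N) → ℝ) (w : Fin m → Fin N → ℝ) : ℝ :=
  ∑ g, A g * ∏ s, w s (g s)

section tensorForm

variable {N m : ℕ} {A : (Fin m → Fin N) → ℝ}

theorem MStochastic.sum_mul_comp_restrict [NeZero N] (hA : MStochastic A) (t : Fin m)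
    (R : ({s // s ≠ t} → Fin N) → ℝ) :
    ∑ g, A g * R (fun s => g s) = ∑ h, R h := by
  let e := Equiv.piSplitAt t fun _ => Fin N
  have hupdate : ∀ v h, e.symm (v, h) = update (e.symm (0, h)) t v := by
    intro v h
    funext s
    by_cases hs : s = t
    · subst hs; simp [e, Equiv.piSplitAt]
    · simp [e, Equiv.piSplitAt, hs]
  have hrestrict : ∀ v h, (fun s : {s // s ≠ t} => e.symm (v, h) s) = h := by
    intro v h
    funext s
    simp [e, Equiv.piSplitAt, s.2]
  rw [← e.symm.sum_comp, Fintype.sum_prod_type, Finset.sum_comm]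
  refine Finset.sum_congr rfl fun h _ => ?_
  simp only [hrestrict, ← Finset.sum_mul]
  rw [Finset.sum_congr rfl fun v _ => congrArg A (hupdate v h), hA.2, one_mul]

theorem mAct_eq_tensorForm (A : (Fin m → Fin N) → ℝ) (t : Fin m) (p : Fin m → Fin N → ℝ)
    (i : Fin N) : mAct A t p i = tensorForm A (update p t (Pi.single i 1)) := by
  refine Finset.sum_congr rfl fun g _ => ?_
  rw [Fintype.prod_update_apply, Pi.single_apply]
  split_ifs <;> ring

theorem tensorForm_update_eq_sum (A : (Fin m → Fin N) → ℝ) (w : Fin m → Fin N → ℝ)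
    (t : Fin m) (u : Fin N → ℝ) :
    tensorForm A (update w t u) = ∑ j, u j * tensorForm A (update w t (Pi.single j 1)) := by
  simp only [tensorForm, Fintype.prod_update_apply, Finset.mul_sum]
  rw [Finset.sum_comm]
  refine Finset.sum_congr rfl fun g _ => ?_
  rw [Finset.sum_eq_single (g t) (fun j _ hj => by simp [Ne.symm hj]) (by simp)]
  simp only [Pi.single_eq_same]
  ring

theorem tensorForm_const_mul (A : (Fin m → Fin N) → ℝ) (c : ℝ) (w : Fin m → Fin N → ℝ) :
    tensorForm A (fun s v => c * w s v) = c ^ m * tensorForm A w := by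
  simp only [tensorForm, Finset.prod_mul_distrib, Finset.prod_const, Finset.card_univ,
    Fintype.card_fin, Finset.mul_sum]
  exact Finset.sum_congr rfl fun g _ => by ring

theorem tensorForm_nonneg (hA : MStochastic A) {w : Fin m → Fin N → ℝ} (hw : 0 ≤ w) :
    0 ≤ tensorForm A w :=
  Finset.sum_nonneg fun g _ => mul_nonneg (hA.1 g) (Finset.prod_nonneg fun s _ => hw s (g s))

theorem tensorForm_mono (hA : MStochastic A) {w w' : Fin m → Fin N → ℝ} (hw : 0 ≤ w)
    (hww' : w ≤ w') : tensorForm A w ≤ tensorForm A w' :=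
  Finset.sum_le_sum fun g _ => mul_le_mul_of_nonneg_left
    (Finset.prod_le_prod (fun s _ => hw s (g s)) fun s _ => hww' s (g s)) (hA.1 g)

theorem MStochastic.tensorForm_eq_prod_sum [NeZero N] (hA : MStochastic A)
    {w : Fin m → Fin N → ℝ} {t : Fin m} (ht : w t = 1) :
    tensorForm A w = ∏ s ∈ univ.erase t, ∑ v, w s v := by
  have hprod : ∀ g : Fin m → Fin N, ∏ s, w s (g s) = ∏ s : {s // s ≠ t}, w s (g s) := by
    intro g
    rw [Fintype.prod_eq_mul_prod_subtype_ne _ t, ht, Pi.one_apply, one_mul]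
  simp only [tensorForm, hprod]
  rw [hA.sum_mul_comp_restrict t fun h => ∏ s : {s // s ≠ t}, w s (h s), ← Fintype.prod_sum]
  exact (Finset.prod_subtype _ (fun s => by simp) fun s => ∑ v, w s v).symm

end tensorForm

section linearization

variable {N m : ℕ} {A : (Fin m → Fin N) → ℝ}

def pinnedWeights (q : Fin N → ℝ) (t t' : Fin m) (i j : Fin N) : Fin m → Fin N → ℝ :=
  update (update (fun _ => q) t (Pi.single i 1)) t' (Pi.single j 1)

theorem pinnedWeights_nonneg {q : Fin N → ℝ} (hq : 0 ≤ q) (t t' : Fin m) (i j : Fin N) :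
    0 ≤ pinnedWeights q t t' i j := by
  have single_nonneg (k : Fin N) : 0 ≤ (Pi.single k 1 : Fin N → ℝ) := Pi.single_nonneg.2 zero_le_one
  intro s
  simp only [pinnedWeights, update_apply]
  split_ifs
  · exact single_nonneg j
  · exact single_nonneg i
  · exact hq

def linearization (A : (Fin m → Fin N) → ℝ) (t t' : Fin m) (q : Fin N → ℝ) (i j : Fin N) : ℝ :=
  tensorForm A (pinnedWeights q t t' i j)

theorem mAct_eq_sum_linearization (A : (Fin m → Fin N) → ℝ) {t t' : Fin m} (htt' : t ≠ t')
    (q : Fin N → ℝ) (i : Fin N) :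
    mAct A t (fun _ => q) i = ∑ j, linearization A t t' q i j * q j := by
  have hw : update (fun _ => q) t (Pi.single i 1) t' = q := update_of_ne htt'.symm _ _
  rw [mAct_eq_tensorForm, ← update_eq_self t' (update (fun _ => q) t (Pi.single i 1)), hw,
    tensorForm_update_eq_sum]
  exact Finset.sum_congr rfl fun j _ => mul_comm _ _

theorem linearization_swap (A : (Fin m → Fin N) → ℝ) {t t' : Fin m} (htt' : t ≠ t')
    (q : Fin N → ℝ) (i j : Fin N) :
    linearization A t t' q i j = linearization A t' t q j i := by
  rw [linearization, linearization, pinnedWeights, pinnedWeights, update_comm htt']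

theorem MStochastic.sum_linearization_right (hA : MStochastic A) (t t' : Fin m)
    {q : Fin N → ℝ} (hq : ∑ j, q j = 1) (i : Fin N) :
    ∑ j, linearization A t t' q i j = 1 := by
  have : NeZero N := ⟨i.pos.ne'⟩
  have hsum := tensorForm_update_eq_sum A (update (fun _ => q) t (Pi.single i 1)) t' 1
  simp only [Pi.one_apply, one_mul] at hsum
  simp only [linearization, pinnedWeights]
  rw [← hsum, hA.tensorForm_eq_prod_sum (update_self _ _ _)]
  refine Finset.prod_eq_one fun s hs => ?_
  rw [update_of_ne (ne_of_mem_erase hs), update_apply]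
  split_ifs
  · simp
  · exact hq

theorem MStochastic.sum_linearization_left (hA : MStochastic A) {t t' : Fin m} (htt' : t ≠ t')
    {q : Fin N → ℝ} (hq : ∑ j, q j = 1) (j : Fin N) :
    ∑ i, linearization A t t' q i j = 1 := by
  simp only [linearization_swap A htt']
  exact hA.sum_linearization_right t' t hq j

theorem MStochastic.linearization_nonneg (hA : MStochastic A) (t t' : Fin m)
    {q : Fin N → ℝ} (hq : 0 ≤ q) (i j : Fin N) : 0 ≤ linearization A t t' q i j :=
  tensorForm_nonneg hA (pinnedWeights_nonneg hq t t' i j)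

theorem MStochastic.pow_le_linearization (hA : MStochastic A) {t t' t'' : Fin m}
    (ht : t'' ≠ t) (ht' : t'' ≠ t') {β : ℝ} (hβ₀ : 0 ≤ β) (hβ₁ : β ≤ 1) {q : Fin N → ℝ}
    (hq : ∀ j, β ≤ q j) (i j : Fin N) : β ^ m ≤ linearization A t t' q i j := by
  have : NeZero N := ⟨i.pos.ne'⟩
  set w := pinnedWeights 1 t t' i j
  have hw : w t'' = 1 := by simp only [w, pinnedWeights, update_of_ne ht', update_of_ne ht]
  have hform : 1 ≤ tensorForm A w := by
    rw [hA.tensorForm_eq_prod_sum hw]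
    refine Finset.one_le_prod fun s _ => ?_
    simp only [w, pinnedWeights, update_apply]
    split_ifs
    · simp
    · simp
    · simpa using Nat.one_le_iff_ne_zero.2 (NeZero.ne N)
  have hβw : (fun s v => β * w s v) ≤ pinnedWeights q t t' i j := by
    intro s v
    have hws := pinnedWeights_nonneg zero_le_one t t' i j s v
    simp only [w, pinnedWeights, update_apply] at hws ⊢
    split_ifs at hws ⊢
    · exact mul_le_of_le_one_left hws hβ₁
    · exact mul_le_of_le_one_left hws hβ₁
    · simpa using hq v
  calc β ^ m ≤ β ^ m * tensorForm A w := le_mul_of_one_le_right (pow_nonneg hβ₀ m) hform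
    _ = tensorForm A (fun s v => β * w s v) := (tensorForm_const_mul A β w).symm
    _ ≤ linearization A t t' q i j := tensorForm_mono hA
        (fun s v => mul_nonneg hβ₀ (pinnedWeights_nonneg zero_le_one t t' i j s v)) hβw

end linearization

def truncatedSimplex (ι : Type*) [Fintype ι] (β : ℝ) : Set (ι → ℝ) :=
  {q | (∀ i, β ≤ q i) ∧ ∑ i, q i = 1}

theorem uniform_mix_mem_truncatedSimplex {N : ℕ} [NeZero N] {p : Fin N → ℝ}
    (hp : p ∈ stdSimplex ℝ (Fin N)) {α : ℝ} (hα : α ≤ 1) :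
    (fun i => α * (N : ℝ)⁻¹ + (1 - α) * p i) ∈ truncatedSimplex (Fin N) (α * (N : ℝ)⁻¹) := by
  refine ⟨fun i => le_add_of_nonneg_right (mul_nonneg (by linarith) (hp.1 i)), ?_⟩
  rw [Finset.sum_add_distrib, Finset.sum_const, ← Finset.mul_sum, hp.2, Finset.card_univ,
    Fintype.card_fin, nsmul_eq_mul]
  field_simp [NeZero.ne N]
  ring

namespace MStochastic

variable {N m : ℕ} {A : (Fin m → Fin N) → ℝ}

theorem sum_mAct [NeZero N] (hA : MStochastic A) (t : Fin m) {p : Fin m → Fin N → ℝ}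
    (hp : ∀ s ≠ t, ∑ v, p s v = 1) : ∑ i, mAct A t p i = 1 := by
  have hsum := tensorForm_update_eq_sum A p t 1
  simp only [Pi.one_apply, one_mul] at hsum
  simp only [mAct_eq_tensorForm]
  rw [← hsum, hA.tensorForm_eq_prod_sum (update_self _ _ _)]
  refine Finset.prod_eq_one fun s hs => ?_
  rw [update_of_ne (ne_of_mem_erase hs)]
  exact hp s (ne_of_mem_erase hs)

theorem mapsTo_truncatedSimplex [NeZero N] (hA : MStochastic A) {t t' : Fin m} (htt' : t ≠ t')
    {β : ℝ} (hβ : 0 ≤ β) :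
    Set.MapsTo (fun q => mAct A t fun _ => q) (truncatedSimplex (Fin N) β)
      (truncatedSimplex (Fin N) β) := by
  rintro q ⟨hq, hq₁⟩
  refine ⟨fun i => ?_, hA.sum_mAct t fun _ _ => hq₁⟩
  have hq₀ : 0 ≤ q := fun j => hβ.trans (hq j)
  show β ≤ mAct A t (fun _ => q) i
  rw [mAct_eq_sum_linearization A htt']
  calc β = ∑ j, linearization A t t' q i j * β := by
        rw [← Finset.sum_mul, hA.sum_linearization_right t t' hq₁, one_mul]
    _ ≤ ∑ j, linearization A t t' q i j * q j := Finset.sum_le_sum fun j _ =>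
        mul_le_mul_of_nonneg_left (hq j) (hA.linearization_nonneg t t' hq₀ i j)

theorem sum_abs_mAct_sub_inv_le (hA : MStochastic A) {t t' t'' : Fin m} (htt' : t ≠ t')
    (ht : t'' ≠ t) (ht' : t'' ≠ t') {β : ℝ} (hβ₀ : 0 ≤ β) (hβ₁ : β ≤ 1) {q : Fin N → ℝ}
    (hq : q ∈ truncatedSimplex (Fin N) β) :
    ∑ i, |mAct A t (fun _ => q) i - (N : ℝ)⁻¹| ≤
      (1 - N * β ^ m) * ∑ i, |q i - (N : ℝ)⁻¹| := by
  obtain ⟨hq, hq₁⟩ := hq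
  have hN : (N : ℝ) ≠ 0 := Nat.cast_ne_zero.2 (by rintro rfl; simp at hq₁)
  have hx : ∑ j, (q j - (N : ℝ)⁻¹) = 0 := by
    simp [Finset.sum_sub_distrib, hq₁, hN]
  have hshift (i : Fin N) : mAct A t (fun _ => q) i - (N : ℝ)⁻¹ =
      ∑ j, linearization A t t' q i j * (q j - (N : ℝ)⁻¹) := by
    simp only [mul_sub, Finset.sum_sub_distrib, ← Finset.sum_mul,
      hA.sum_linearization_right t t' hq₁, one_mul, mAct_eq_sum_linearization A htt']
  simp only [hshift]
  simpa using sum_abs_sum_mul_le (hA.pow_le_linearization ht ht' hβ₀ hβ₁ hq)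
    (hA.sum_linearization_left htt' hq₁) hx

end MStochastic

theorem mAct_iterates_tendsto_uniform {N m : ℕ} (hm : 3 ≤ m)
    (A : (Fin m → Fin N) → ℝ) (hA : MStochastic A)
    (α : ℝ) (hα : α ∈ Set.Ioc (0 : ℝ) 1)
    (p0 : Fin N → ℝ) (hp0 : p0 ∈ stdSimplex ℝ (Fin N))
    (q : ℕ → Fin N → ℝ)
    (hq0 : q 0 = fun i => α * (N : ℝ)⁻¹ + (1 - α) * p0 i)
    (hrec : ∀ n, q (n + 1) = mAct A ⟨0, by omega⟩ fun _ => q n) :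
    Filter.Tendsto q Filter.atTop (nhds fun _ => (N : ℝ)⁻¹) := by
  obtain ⟨hα₀, hα₁⟩ := hα
  have : NeZero N := ⟨by rintro rfl; simpa using hp0.2⟩
  have hN : (1 : ℝ) ≤ N := by exact_mod_cast Nat.one_le_iff_ne_zero.2 (NeZero.ne N)
  set β := α * (N : ℝ)⁻¹
  have hβ₀ : 0 < β := by positivity
  have hβ₁ : β ≤ 1 := mul_le_one₀ hα₁ (by positivity) (inv_le_one_of_one_le₀ hN)
  have hNβ : N * β = α := by
    simp only [β]
    field_simp
  have hq (n : ℕ) : q n ∈ truncatedSimplex (Fin N) β := by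
    induction n with
    | zero => exact hq0 ▸ uniform_mix_mem_truncatedSimplex hp0 hα₁
    | succ n ih =>
      exact hrec n ▸ hA.mapsTo_truncatedSimplex (t' := ⟨1, by omega⟩) (by simp) hβ₀.le ih
  refine tendsto_pi_of_sum_abs_sub_le_mul (r := 1 - N * β ^ m) ?_ ?_ fun n => ?_
  · nlinarith [pow_le_of_le_one hβ₀.le hβ₁ (by omega : m ≠ 0)]
  · nlinarith [pow_pos hβ₀ m]
  · rw [hrec]
    exact hA.sum_abs_mAct_sub_inv_le (t' := ⟨1, by omega⟩) (t'' := ⟨2, by omega⟩)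
      (by simp) (by simp) (by simp) hβ₀.le hβ₁ (hq n)
end

section
/- If q^(0) = α·e + (1−α)·p^(0) with probability vectors involved, and q^(n+1) = A[q^(n),...,q^(n)], p^(n+1) = A[p^(n),...,p^(n)] for an m-stochastic tensor A, then for all n: q^(n) = (1 − (1−α)^{(m−1)^n})·e + (1−α)^{(m−1)^n}·p^(n). -/
open Finset

private lemma updNe {α : Sort*} [DecidableEq α] {β : Sort*} (f : α → β) (a' : α) (v : β)
    {a : α} (h : a ≠ a') : Function.update f a' v a = f a := by
  rw [Function.update_apply, if_neg h]

private lemma sum_mul_eq_of_update {N m : ℕ} (u : Fin m) (B B' C : (Fin m → Fin N) → ℝ)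
    (hC : ∀ g v, C (Function.update g u v) = C g)
    (hBB' : ∀ g, ∑ v, B (Function.update g u v) = ∑ v, B' (Function.update g u v)) :
    ∑ g : Fin m → Fin N, B g * C g = ∑ g : Fin m → Fin N, B' g * C g := by
  classical
  rcases Nat.eq_zero_or_pos N with hN | hN
  · subst hN
    have : IsEmpty (Fin m → Fin 0) := ⟨fun g => (g u).elim0⟩
    simp [Finset.univ_eq_empty]
  · have key : ∀ D : (Fin m → Fin N) → ℝ,
        ∑ g : Fin m → Fin N, D g
          = ∑ h : {j : Fin m // j ≠ u} → Fin N, ∑ v : Fin N,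
              D ((Equiv.funSplitAt u (Fin N)).symm (v, h)) := by
      intro D
      rw [← Equiv.sum_comp (Equiv.funSplitAt u (Fin N)).symm D, Fintype.sum_prod_type]
      exact Finset.sum_comm
    rw [key (fun g => B g * C g), key (fun g => B' g * C g)]
    refine Finset.sum_congr rfl fun h _ => ?_
    set g0 : Fin m → Fin N := (Equiv.funSplitAt u (Fin N)).symm (⟨0, hN⟩, h) with hg0
    have hrepr : ∀ v : Fin N, (Equiv.funSplitAt u (Fin N)).symm (v, h) = Function.update g0 u v := by
      intro v
      funext j
      rcases eq_or_ne j u with hj | hj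
      · subst hj; simp
      · rw [updNe _ _ _ hj]
        simp [hg0, hj]
    show ∑ v : Fin N,
          B ((Equiv.funSplitAt u (Fin N)).symm (v, h)) * C ((Equiv.funSplitAt u (Fin N)).symm (v, h))
        = ∑ v : Fin N,
          B' ((Equiv.funSplitAt u (Fin N)).symm (v, h)) * C ((Equiv.funSplitAt u (Fin N)).symm (v, h))
    calc ∑ v : Fin N,
          B ((Equiv.funSplitAt u (Fin N)).symm (v, h)) * C ((Equiv.funSplitAt u (Fin N)).symm (v, h))
        = ∑ v : Fin N, B (Function.update g0 u v) * C g0 := by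
          refine Finset.sum_congr rfl fun v _ => ?_
          rw [hrepr v, hC]
      _ = (∑ v : Fin N, B (Function.update g0 u v)) * C g0 := by rw [Finset.sum_mul]
      _ = (∑ v : Fin N, B' (Function.update g0 u v)) * C g0 := by rw [hBB' g0]
      _ = ∑ v : Fin N, B' (Function.update g0 u v) * C g0 := by rw [Finset.sum_mul]
      _ = ∑ v : Fin N,
          B' ((Equiv.funSplitAt u (Fin N)).symm (v, h)) * C ((Equiv.funSplitAt u (Fin N)).symm (v, h)) := by
          refine Finset.sum_congr rfl fun v _ => ?_
          rw [hrepr v, hC]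

private lemma sum_prod_coords {N m : ℕ} (R : Fin m → Fin N → ℝ) :
    ∑ g : Fin m → Fin N, ∏ s, R s (g s) = ∏ s, ∑ x, R s x :=
  (Fintype.prod_sum R).symm

private lemma sum_mAct {N m : ℕ} (hN : 0 < N) (A : (Fin m → Fin N) → ℝ)
    (hA : MStochastic A) (t : Fin m) (P : Fin m → Fin N → ℝ) :
    ∑ i, mAct A t P i = ∏ s ∈ univ.erase t, ∑ x, P s x := by
  classical
  have hNne : (N : ℝ) ≠ 0 := Nat.cast_ne_zero.mpr hN.ne'
  have step0 : ∑ i, mAct A t P i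
      = ∑ g : Fin m → Fin N, A g * ∏ s ∈ univ.erase t, P s (g s) := by
    simp only [mAct]
    rw [Finset.sum_comm]
    refine Finset.sum_congr rfl fun g _ => ?_
    simp
  rw [step0]
  have hC : ∀ (g : Fin m → Fin N) (v : Fin N),
      ∏ s ∈ univ.erase t, P s (Function.update g t v s) = ∏ s ∈ univ.erase t, P s (g s) :=
    fun g v => Finset.prod_congr rfl fun s hs => by
      rw [updNe _ _ _ (Finset.mem_erase.mp hs).1]
  have hBB' : ∀ g : Fin m → Fin N,
      ∑ v, A (Function.update g t v)
        = ∑ v, (fun _ : Fin m → Fin N => (N : ℝ)⁻¹) (Function.update g t v) := by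
    intro g
    rw [hA.2 t g]
    simp [Finset.card_univ, mul_inv_cancel₀ hNne]
  calc ∑ g : Fin m → Fin N, A g * ∏ s ∈ univ.erase t, P s (g s)
      = ∑ g : Fin m → Fin N, (N : ℝ)⁻¹ * ∏ s ∈ univ.erase t, P s (g s) :=
        sum_mul_eq_of_update t A _ _ hC hBB'
    _ = (N : ℝ)⁻¹ * ∑ g : Fin m → Fin N, ∏ s ∈ univ.erase t, P s (g s) := by
        rw [← Finset.mul_sum]
    _ = (N : ℝ)⁻¹ * ∑ g : Fin m → Fin N, ∏ s, (fun s x => if s = t then (1:ℝ) else P s x) s (g s) := by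
        congr 1
        refine Finset.sum_congr rfl fun g _ => ?_
        have h1 : (fun s x => if s = t then (1:ℝ) else P s x) t (g t) = 1 := by simp
        have h2 : ∏ s ∈ univ.erase t, (fun s x => if s = t then (1:ℝ) else P s x) s (g s)
            = ∏ s ∈ univ.erase t, P s (g s) :=
          Finset.prod_congr rfl fun s hs => by simp [(Finset.mem_erase.mp hs).1]
        rw [← Finset.mul_prod_erase univ (fun s => (fun s x => if s = t then (1:ℝ) else P s x) s (g s))
            (Finset.mem_univ t), h1, h2, one_mul]
    _ = (N : ℝ)⁻¹ * ∏ s, ∑ x, (fun s x => if s = t then (1:ℝ) else P s x) s x := by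
        congr 1
        exact sum_prod_coords (fun s x => if s = t then (1:ℝ) else P s x)
    _ = ∏ s ∈ univ.erase t, ∑ x, P s x := by
        rw [← Finset.mul_prod_erase univ (fun s => ∑ x, (fun s x => if s = t then (1:ℝ) else P s x) s x)
            (Finset.mem_univ t)]
        have h1 : ∑ x : Fin N, (fun s x => if s = t then (1:ℝ) else P s x) t x = (N : ℝ) := by
          simp [Finset.card_univ]
        have h2 : ∏ s ∈ univ.erase t, (∑ x, (fun s x => if s = t then (1:ℝ) else P s x) s x)
            = ∏ s ∈ univ.erase t, ∑ x, P s x :=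
          Finset.prod_congr rfl fun s hs => by simp [(Finset.mem_erase.mp hs).1]
        rw [h1, h2, ← mul_assoc, inv_mul_cancel₀ hNne, one_mul]

private lemma mAct_const_one_slot {N m : ℕ} (hN : 0 < N) (A : (Fin m → Fin N) → ℝ)
    (hA : MStochastic A) (t u : Fin m) (hut : u ≠ t) (P : Fin m → Fin N → ℝ)
    (hPu : P u = fun _ => 1) (i : Fin N) :
    mAct A t P i = ∏ s ∈ (univ.erase t).erase u, ∑ x, P s x := by
  classical
  have hNne : (N : ℝ) ≠ 0 := Nat.cast_ne_zero.mpr hN.ne'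
  have hmem : u ∈ univ.erase t := Finset.mem_erase.mpr ⟨hut, Finset.mem_univ u⟩
  set R : Fin m → Fin N → ℝ :=
    fun s x => if s = t then (if x = i then 1 else 0) else if s = u then 1 else P s x with hRdef
  have hC : ∀ (g : Fin m → Fin N) (v : Fin N),
      (if Function.update g u v t = i then
          ∏ s ∈ (univ.erase t).erase u, P s (Function.update g u v s) else 0)
        = (if g t = i then ∏ s ∈ (univ.erase t).erase u, P s (g s) else 0) := by
    intro g v
    rw [updNe _ _ _ (Ne.symm hut)]
    have : ∏ s ∈ (univ.erase t).erase u, P s (Function.update g u v s)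
        = ∏ s ∈ (univ.erase t).erase u, P s (g s) :=
      Finset.prod_congr rfl fun s hs => by rw [updNe _ _ _ (Finset.mem_erase.mp hs).1]
    rw [this]
  have hBB' : ∀ g : Fin m → Fin N,
      ∑ v, A (Function.update g u v)
        = ∑ v, (fun _ : Fin m → Fin N => (N : ℝ)⁻¹) (Function.update g u v) := by
    intro g
    rw [hA.2 u g]
    simp [Finset.card_univ, mul_inv_cancel₀ hNne]
  calc mAct A t P i
      = ∑ g : Fin m → Fin N, A g * (if g t = i then ∏ s ∈ (univ.erase t).erase u, P s (g s) else 0) := by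
        simp only [mAct]
        refine Finset.sum_congr rfl fun g _ => ?_
        rw [← Finset.mul_prod_erase (univ.erase t) (fun s => P s (g s)) hmem, hPu]
        split_ifs <;> simp
    _ = ∑ g : Fin m → Fin N, (N : ℝ)⁻¹ * (if g t = i then ∏ s ∈ (univ.erase t).erase u, P s (g s) else 0) :=
        sum_mul_eq_of_update u A _ _ hC hBB'
    _ = (N : ℝ)⁻¹ * ∑ g : Fin m → Fin N,
          (if g t = i then ∏ s ∈ (univ.erase t).erase u, P s (g s) else 0) := by
        rw [← Finset.mul_sum]
    _ = (N : ℝ)⁻¹ * ∑ g : Fin m → Fin N, ∏ s, R s (g s) := by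
        congr 1
        refine Finset.sum_congr rfl fun g _ => ?_
        rw [← Finset.mul_prod_erase univ (fun s => R s (g s)) (Finset.mem_univ t),
            ← Finset.mul_prod_erase (univ.erase t) (fun s => R s (g s)) hmem]
        have h1 : R t (g t) = if g t = i then 1 else 0 := by simp [hRdef]
        have h2 : R u (g u) = 1 := by simp [hRdef, hut]
        have h3 : ∏ s ∈ (univ.erase t).erase u, R s (g s)
            = ∏ s ∈ (univ.erase t).erase u, P s (g s) :=
          Finset.prod_congr rfl fun s hs => by
            have hs' := Finset.mem_erase.mp hs
            have hs'' := Finset.mem_erase.mp hs'.2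
            simp [hRdef, hs'.1, hs''.1]
        rw [h1, h2, h3, one_mul]
        split_ifs <;> simp
    _ = (N : ℝ)⁻¹ * ∏ s, ∑ x, R s x := by rw [sum_prod_coords]
    _ = ∏ s ∈ (univ.erase t).erase u, ∑ x, P s x := by
        rw [← Finset.mul_prod_erase univ (fun s => ∑ x, R s x) (Finset.mem_univ t),
            ← Finset.mul_prod_erase (univ.erase t) (fun s => ∑ x, R s x) hmem]
        have h1 : ∑ x, R t x = 1 := by simp [hRdef]
        have h2 : ∑ x, R u x = (N : ℝ) := by simp [hRdef, hut, Finset.card_univ]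
        have h3 : ∏ s ∈ (univ.erase t).erase u, (∑ x, R s x)
            = ∏ s ∈ (univ.erase t).erase u, ∑ x, P s x :=
          Finset.prod_congr rfl fun s hs => by
            have hs' := Finset.mem_erase.mp hs
            have hs'' := Finset.mem_erase.mp hs'.2
            simp [hRdef, hs'.1, hs''.1]
        rw [h1, h2, h3, one_mul, ← mul_assoc, inv_mul_cancel₀ hNne, one_mul]

private lemma mAct_mix {N m : ℕ} (hN : 0 < N) (hm : 2 ≤ m) (A : (Fin m → Fin N) → ℝ)
    (hA : MStochastic A) (t : Fin m) (β : ℝ) (pv : Fin N → ℝ) (hpv : ∑ j, pv j = 1) :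
    mAct A t (fun _ j => (1 - β) * (N : ℝ)⁻¹ + β * pv j)
      = fun i => (1 - β ^ (m - 1)) * (N : ℝ)⁻¹ + β ^ (m - 1) * mAct A t (fun _ => pv) i := by
  classical
  have hNne : (N : ℝ) ≠ 0 := Nat.cast_ne_zero.mpr hN.ne'
  have hcard : (univ.erase t).card = m - 1 := by
    rw [Finset.card_erase_of_mem (Finset.mem_univ t), Finset.card_univ, Fintype.card_fin]
  funext i
  have expand : ∀ g : Fin m → Fin N,
      ∏ s ∈ univ.erase t, ((1 - β) * (N : ℝ)⁻¹ + β * pv (g s))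
        = ∑ S ∈ (univ.erase t).powerset,
            β ^ S.card * ((1 - β) * (N : ℝ)⁻¹) ^ (m - 1 - S.card) * ∏ s ∈ S, pv (g s) := by
    intro g
    calc ∏ s ∈ univ.erase t, ((1 - β) * (N : ℝ)⁻¹ + β * pv (g s))
        = ∏ s ∈ univ.erase t, (β * pv (g s) + (1 - β) * (N : ℝ)⁻¹) :=
          Finset.prod_congr rfl fun s _ => add_comm _ _
      _ = ∑ S ∈ (univ.erase t).powerset,
            (∏ s ∈ S, (β * pv (g s))) * ∏ _s ∈ univ.erase t \ S, ((1 - β) * (N : ℝ)⁻¹) :=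
          Finset.prod_add _ _ _
      _ = ∑ S ∈ (univ.erase t).powerset,
            β ^ S.card * ((1 - β) * (N : ℝ)⁻¹) ^ (m - 1 - S.card) * ∏ s ∈ S, pv (g s) := by
          refine Finset.sum_congr rfl fun S hS => ?_
          rw [Finset.prod_mul_distrib, Finset.prod_const, Finset.prod_const,
              Finset.card_sdiff_of_subset (Finset.mem_powerset.mp hS), hcard]
          ring
  have step1 : mAct A t (fun _ j => (1 - β) * (N : ℝ)⁻¹ + β * pv j) i
      = ∑ S ∈ (univ.erase t).powerset,
          β ^ S.card * ((1 - β) * (N : ℝ)⁻¹) ^ (m - 1 - S.card)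
            * ∑ g : Fin m → Fin N, (if g t = i then A g * ∏ s ∈ S, pv (g s) else 0) := by
    simp only [mAct]
    calc ∑ g : Fin m → Fin N,
          (if g t = i then A g * ∏ s ∈ univ.erase t, ((1 - β) * (N : ℝ)⁻¹ + β * pv (g s)) else 0)
        = ∑ g : Fin m → Fin N, ∑ S ∈ (univ.erase t).powerset,
            (if g t = i then
              β ^ S.card * ((1 - β) * (N : ℝ)⁻¹) ^ (m - 1 - S.card) * (A g * ∏ s ∈ S, pv (g s))
            else 0) := by
          refine Finset.sum_congr rfl fun g _ => ?_
          rw [expand g, Finset.mul_sum]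
          split_ifs
          · exact Finset.sum_congr rfl fun S _ => by ring
          · simp
      _ = ∑ S ∈ (univ.erase t).powerset, ∑ g : Fin m → Fin N,
            (if g t = i then
              β ^ S.card * ((1 - β) * (N : ℝ)⁻¹) ^ (m - 1 - S.card) * (A g * ∏ s ∈ S, pv (g s))
            else 0) := Finset.sum_comm
      _ = ∑ S ∈ (univ.erase t).powerset,
          β ^ S.card * ((1 - β) * (N : ℝ)⁻¹) ^ (m - 1 - S.card)
            * ∑ g : Fin m → Fin N, (if g t = i then A g * ∏ s ∈ S, pv (g s) else 0) := by
          refine Finset.sum_congr rfl fun S _ => ?_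
          rw [Finset.mul_sum]
          refine Finset.sum_congr rfl fun g _ => ?_
          split_ifs <;> ring
  have stepF : ∀ S ∈ (univ.erase t).powerset.erase (univ.erase t),
      (∑ g : Fin m → Fin N, if g t = i then A g * ∏ s ∈ S, pv (g s) else 0)
        = (N : ℝ) ^ (m - 2 - S.card) := by
    intro S hS
    obtain ⟨hSne, hSp⟩ := Finset.mem_erase.mp hS
    have hSE : S ⊆ univ.erase t := Finset.mem_powerset.mp hSp
    obtain ⟨u, huE, huS⟩ : ∃ u ∈ univ.erase t, u ∉ S := by
      by_contra hcon
      push_neg at hcon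
      exact hSne (Finset.Subset.antisymm (fun x hx => hcon x hx) hSE).symm
    have hut : u ≠ t := (Finset.mem_erase.mp huE).1
    have hPu : (fun s => if s ∈ S then pv else fun _ => (1:ℝ)) u = fun _ => 1 := by simp [huS]
    have hF : (∑ g : Fin m → Fin N, if g t = i then A g * ∏ s ∈ S, pv (g s) else 0)
        = mAct A t (fun s => if s ∈ S then pv else fun _ => 1) i := by
      simp only [mAct]
      refine Finset.sum_congr rfl fun g _ => ?_
      have hprod : ∏ s ∈ univ.erase t, (if s ∈ S then pv else fun _ => (1:ℝ)) (g s)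
          = ∏ s ∈ S, pv (g s) := by
        have h4 : ∀ s, (if s ∈ S then pv else fun _ => (1:ℝ)) (g s)
            = if s ∈ S then pv (g s) else 1 := fun s => by split_ifs <;> rfl
        calc ∏ s ∈ univ.erase t, (if s ∈ S then pv else fun _ => (1:ℝ)) (g s)
            = ∏ s ∈ univ.erase t, (if s ∈ S then pv (g s) else 1) :=
              Finset.prod_congr rfl fun s _ => h4 s
          _ = ∏ s ∈ univ.erase t ∩ S, pv (g s) := Finset.prod_ite_mem _ _ _
          _ = ∏ s ∈ S, pv (g s) := by rw [Finset.inter_eq_right.mpr hSE]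
      rw [hprod]
    rw [hF, mAct_const_one_slot hN A hA t u hut _ hPu i]
    have hsub : S ⊆ (univ.erase t).erase u := Finset.subset_erase.mpr ⟨hSE, huS⟩
    calc ∏ s ∈ (univ.erase t).erase u, ∑ x, (if s ∈ S then pv else fun _ => (1:ℝ)) x
        = ∏ s ∈ (univ.erase t).erase u, (if s ∈ S then (1:ℝ) else (N : ℝ)) := by
          refine Finset.prod_congr rfl fun s _ => ?_
          split_ifs with h
          · exact hpv
          · simp [Finset.card_univ]
      _ = (N : ℝ) ^ (m - 2 - S.card) := by
          rw [Finset.prod_ite, Finset.prod_const_one, one_mul, Finset.prod_const]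
          congr 1
          have hfil : Finset.filter (fun s => ¬ s ∈ S) ((univ.erase t).erase u)
              = (univ.erase t).erase u \ S := by
            ext s; simp [Finset.mem_sdiff, Finset.mem_filter]
          rw [hfil, Finset.card_sdiff_of_subset hsub, Finset.card_erase_of_mem huE, hcard]
          omega
  have hbinom : ∑ S ∈ (univ.erase t).powerset, β ^ S.card * (1 - β) ^ (m - 1 - S.card) = 1 := by
    calc ∑ S ∈ (univ.erase t).powerset, β ^ S.card * (1 - β) ^ (m - 1 - S.card)
        = ∑ S ∈ (univ.erase t).powerset, (∏ _s ∈ S, β) * ∏ _s ∈ univ.erase t \ S, (1 - β) :=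
          Finset.sum_congr rfl fun S hS => by
            rw [Finset.prod_const, Finset.prod_const,
              Finset.card_sdiff_of_subset (Finset.mem_powerset.mp hS), hcard]
      _ = ∏ _s ∈ univ.erase t, (β + (1 - β)) := (Finset.prod_add _ _ _).symm
      _ = 1 := by rw [show β + (1 - β) = (1:ℝ) by ring, Finset.prod_const_one]
  have hsum_erase : ∑ S ∈ (univ.erase t).powerset.erase (univ.erase t),
      β ^ S.card * (1 - β) ^ (m - 1 - S.card) = 1 - β ^ (m - 1) := by
    have h2 : β ^ (univ.erase t).card * (1 - β) ^ (m - 1 - (univ.erase t).card)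
          + ∑ S ∈ (univ.erase t).powerset.erase (univ.erase t),
              β ^ S.card * (1 - β) ^ (m - 1 - S.card)
        = ∑ S ∈ (univ.erase t).powerset, β ^ S.card * (1 - β) ^ (m - 1 - S.card) :=
      Finset.add_sum_erase (univ.erase t).powerset
        (fun S => β ^ S.card * (1 - β) ^ (m - 1 - S.card)) (Finset.mem_powerset_self (univ.erase t))
    rw [hbinom, hcard, Nat.sub_self, pow_zero, mul_one] at h2
    linarith
  have hterm : ∀ S ∈ (univ.erase t).powerset.erase (univ.erase t),
      β ^ S.card * ((1 - β) * (N : ℝ)⁻¹) ^ (m - 1 - S.card)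
          * ∑ g : Fin m → Fin N, (if g t = i then A g * ∏ s ∈ S, pv (g s) else 0)
        = (β ^ S.card * (1 - β) ^ (m - 1 - S.card)) * (N : ℝ)⁻¹ := by
    intro S hS
    rw [stepF S hS]
    obtain ⟨hSne, hSp⟩ := Finset.mem_erase.mp hS
    have hk : S.card ≤ m - 2 := by
      have h1 : S.card < (univ.erase t).card :=
        Finset.card_lt_card (Finset.ssubset_iff_subset_ne.mpr ⟨Finset.mem_powerset.mp hSp, hSne⟩)
      omega
    have hj : m - 1 - S.card = (m - 2 - S.card) + 1 := by omega
    have hNN : ((N : ℝ)⁻¹) ^ (m - 2 - S.card) * (N : ℝ) ^ (m - 2 - S.card) = 1 := by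
      rw [← mul_pow, inv_mul_cancel₀ hNne, one_pow]
    calc β ^ S.card * ((1 - β) * (N : ℝ)⁻¹) ^ (m - 1 - S.card) * (N : ℝ) ^ (m - 2 - S.card)
        = β ^ S.card * ((1 - β) ^ (m - 1 - S.card)
            * (((N : ℝ)⁻¹) ^ (m - 1 - S.card) * (N : ℝ) ^ (m - 2 - S.card))) := by
          rw [mul_pow]; ring
      _ = β ^ S.card * ((1 - β) ^ (m - 1 - S.card) * (N : ℝ)⁻¹) := by
          have hNN2 : ((N : ℝ)⁻¹) ^ (m - 1 - S.card) * (N : ℝ) ^ (m - 2 - S.card) = (N : ℝ)⁻¹ := by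
            rw [hj, pow_succ,
              show ((N : ℝ)⁻¹) ^ (m - 2 - S.card) * (N : ℝ)⁻¹ * (N : ℝ) ^ (m - 2 - S.card)
                = (((N : ℝ)⁻¹) ^ (m - 2 - S.card) * (N : ℝ) ^ (m - 2 - S.card)) * (N : ℝ)⁻¹ from by
                  ring, hNN, one_mul]
          rw [hNN2]
      _ = (β ^ S.card * (1 - β) ^ (m - 1 - S.card)) * (N : ℝ)⁻¹ := by ring
  have hFE : (∑ g : Fin m → Fin N, if g t = i then A g * ∏ s ∈ univ.erase t, pv (g s) else 0)
      = mAct A t (fun _ => pv) i := rfl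
  rw [step1, ← Finset.add_sum_erase _ _ (Finset.mem_powerset_self (univ.erase t)),
    Finset.sum_congr rfl hterm, hcard, Nat.sub_self, pow_zero, mul_one, hFE,
    ← Finset.sum_mul, hsum_erase]
  ring

theorem mAct_iterates_formula {N m : ℕ} (hm : 2 ≤ m)
    (A : (Fin m → Fin N) → ℝ) (hA : MStochastic A)
    (α : ℝ) (hα : α ∈ Set.Icc (0 : ℝ) 1)
    (p0 : Fin N → ℝ) (hp0 : p0 ∈ stdSimplex ℝ (Fin N))
    (p q : ℕ → Fin N → ℝ)
    (hp0' : p 0 = p0)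
    (hq0 : q 0 = fun i => α * (N : ℝ)⁻¹ + (1 - α) * p0 i)
    (hprec : ∀ n, p (n + 1) = mAct A ⟨0, by omega⟩ fun _ => p n)
    (hqrec : ∀ n, q (n + 1) = mAct A ⟨0, by omega⟩ fun _ => q n) :
    ∀ n, q n = fun i =>
      (1 - (1 - α) ^ ((m - 1) ^ n)) * (N : ℝ)⁻¹ + (1 - α) ^ ((m - 1) ^ n) * p n i := by
  classical
  have hN : 0 < N := by
    rcases Nat.eq_zero_or_pos N with h0 | h
    · exfalso
      have h1 := hp0.2
      subst h0
      simp at h1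
    · exact h
  set t : Fin m := ⟨0, by omega⟩ with ht
  have hprec' : ∀ n, p (n + 1) = mAct A t fun _ => p n := hprec
  have hqrec' : ∀ n, q (n + 1) = mAct A t fun _ => q n := hqrec
  have psum : ∀ n, ∑ j, p n j = 1 := by
    intro n
    induction n with
    | zero => rw [hp0']; exact hp0.2
    | succ n ih =>
      rw [hprec' n, sum_mAct hN A hA t (fun _ => p n)]
      simp [ih]
  intro n
  induction n with
  | zero =>
    rw [hq0, hp0']
    funext i
    rw [pow_zero, pow_one]
    ring
  | succ n ih =>
    rw [hqrec' n, ih, mAct_mix hN hm A hA t ((1 - α) ^ ((m - 1) ^ n)) (p n) (psum n),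
      ← hprec' n, ← pow_mul, ← pow_succ]
end

section
/- Let A be a tristochastic tensor and 𝟙_A a probability vector that is an identity of the product ⋆_A (i.e. 𝟙_A ⋆_A p = p ⋆_A 𝟙_A = p for all probability vectors p). Then 𝟙_A is a standard basis vector: there exists k such that (𝟙_A)_i = δ_{ik}. -/
/-- A tristochastic tensor: nonnegative entries and all three one-index marginals equal `1`. -/
def Tristochastic {N : ℕ} (A : Fin N → Fin N → Fin N → ℝ) : Prop :=
  (∀ i j k, 0 ≤ A i j k) ∧ (∀ j k, ∑ i, A i j k = 1) ∧
    (∀ i k, ∑ j, A i j k = 1) ∧ (∀ i j, ∑ k, A i j k = 1)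

theorem identity_is_basis_vector {N : ℕ} (A : Fin N → Fin N → Fin N → ℝ)
    (hA : Tristochastic A)
    (u : Fin N → ℝ) (hu : u ∈ stdSimplex ℝ (Fin N))
    (hid : ∀ p ∈ stdSimplex ℝ (Fin N), conv A u p = p ∧ conv A p u = p) :
    ∃ k : Fin N, ∀ i, u i = if i = k then 1 else 0 := by
  obtain ⟨hu0, hu1⟩ := hu
  have he : ∀ j : Fin N, (fun i => if i = j then (1:ℝ) else 0) ∈ stdSimplex ℝ (Fin N) := by
    intro j
    refine ⟨fun i => ?_, by simp⟩
    dsimp only; split <;> norm_num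
  have key : ∀ i j : Fin N, ∑ m, A i m j * u m = if i = j then 1 else 0 := by
    intro i j
    have h := (hid _ (he j)).1
    have h2 := congrFun h i
    simp only [conv, mul_ite, mul_one, mul_zero, Finset.sum_ite_eq', Finset.mem_univ,
      if_true] at h2
    simpa [mul_comm] using h2
  have hz : ∀ m i j : Fin N, i ≠ j → A i m j * u m = 0 := by
    intro m i j hij
    have hsum := key i j
    rw [if_neg hij] at hsum
    have hnn : ∀ m ∈ Finset.univ, (0:ℝ) ≤ A i m j * u m := fun m _ =>
      mul_nonneg (hA.1 _ _ _) (hu0 m)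
    exact (Finset.sum_eq_zero_iff_of_nonneg hnn).mp hsum m (Finset.mem_univ m)
  have hone : ∀ m : Fin N, 0 < u m → ∀ i, A i m i = 1 := by
    intro m hm i
    have h3 := hA.2.2.2 i m
    rw [Finset.sum_eq_single i (fun j _ hj => ?_) (by simp)] at h3
    · exact h3
    · rcases mul_eq_zero.mp (hz m i j (fun h => hj h.symm)) with h | h
      · exact h
      · exact absurd h (ne_of_gt hm)
  obtain ⟨k, -, hk⟩ : ∃ k ∈ Finset.univ, u k ≠ 0 := by
    apply Finset.exists_ne_zero_of_sum_ne_zero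
    rw [hu1]; norm_num
  have hkpos : 0 < u k := lt_of_le_of_ne (hu0 k) (Ne.symm hk)
  refine ⟨k, fun i => ?_⟩
  have hzero : ∀ m : Fin N, m ≠ k → u m = 0 := by
    intro m hmk
    by_contra hm
    have hmpos : 0 < u m := lt_of_le_of_ne (hu0 m) (Ne.symm hm)
    have h4 := hA.2.2.1 k k
    have hle : ∑ j ∈ ({m, k} : Finset (Fin N)), A k j k ≤ ∑ j, A k j k :=
      Finset.sum_le_sum_of_subset_of_nonneg (Finset.subset_univ _)
        (fun j _ _ => hA.1 _ _ _)
    rw [Finset.sum_pair hmk, hone m hmpos k, hone k hkpos k, h4] at hle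
    norm_num at hle
  by_cases hik : i = k
  · subst hik
    rw [if_pos rfl, ← hu1, Finset.sum_eq_single i (fun j _ hj => hzero j hj) (by simp)]
  · rw [if_neg hik]
    exact hzero i hik
end

section
/- Let A be a tristochastic tensor and 𝟙_A = δ_{·,k} an identity of ⋆_A concentrated on index k. Then for all i, j ∈ {1,...,N}: A_{ijk} = A_{ikj} = δ_{ij}. -/
theorem identity_slice_eq_delta {N : ℕ} (A : Fin N → Fin N → Fin N → ℝ)
    (hA : Tristochastic A) (k : Fin N)
    (hid : ∀ p ∈ stdSimplex ℝ (Fin N),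
      conv A (fun i => if i = k then 1 else 0) p = p ∧
      conv A p (fun i => if i = k then 1 else 0) = p) :
    ∀ i j, A i j k = (if i = j then 1 else 0) ∧ A i k j = (if i = j then 1 else 0) := by
  intro i j
  have hmem : (fun i => if i = j then (1:ℝ) else 0) ∈ stdSimplex ℝ (Fin N) := by
    constructor
    · intro x; dsimp; split <;> norm_num
    · simp [Finset.sum_ite_eq']
  obtain ⟨h1, h2⟩ := hid _ hmem
  constructor
  · have := congrFun h2 i
    simpa [conv, Finset.sum_ite_eq', mul_ite, Finset.mul_sum, eq_comm] using this
  · have := congrFun h1 i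
    simpa [conv, Finset.sum_ite_eq', mul_ite, Finset.mul_sum, eq_comm] using this
end

section
/- Let A be a tristochastic tensor whose product ⋆_A has identity 𝟙_A. A probability vector p has an inverse q (i.e. p ⋆_A q = q ⋆_A p = 𝟙_A) if and only if p is a standard basis vector p_i = δ_{im} for some m, and there exists n with A_{kmn} = A_{knm} = 1, where k is the index on which 𝟙_A is concentrated. -/
/-- If nonnegative `f` sums to 1 and `f a = 1` then every other value is 0. -/
lemma aux_zero {N : ℕ} (f : Fin N → ℝ) (h0 : ∀ x, 0 ≤ f x) (h1 : ∑ x, f x = 1)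
    (a b : Fin N) (ha : f a = 1) (hb : b ≠ a) : f b = 0 := by
  have h := Finset.add_sum_erase Finset.univ f (Finset.mem_univ a)
  have hb1 : f b ≤ ∑ x ∈ Finset.univ.erase a, f x :=
    Finset.single_le_sum (fun x _ => h0 x) (Finset.mem_erase.mpr ⟨hb, Finset.mem_univ b⟩)
  have := h0 b
  linarith

theorem inverse_iff {N : ℕ} (A : Fin N → Fin N → Fin N → ℝ)
    (hA : Tristochastic A) (k : Fin N)
    (hid : ∀ p ∈ stdSimplex ℝ (Fin N),
      conv A (fun i => if i = k then 1 else 0) p = p ∧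
      conv A p (fun i => if i = k then 1 else 0) = p)
    (p : Fin N → ℝ) (hp : p ∈ stdSimplex ℝ (Fin N)) :
    (∃ q ∈ stdSimplex ℝ (Fin N),
        conv A p q = (fun i => if i = k then 1 else 0) ∧
        conv A q p = (fun i => if i = k then 1 else 0)) ↔
      (∃ m : Fin N, (∀ i, p i = if i = m then 1 else 0) ∧
        ∃ n : Fin N, A k m n = 1 ∧ A k n m = 1) := by
  obtain ⟨hA0, hA1, hA2, hA3⟩ := hA
  have hAle : ∀ i j l, A i j l ≤ 1 := fun i j l => by
    have := Finset.single_le_sum (fun i' (_ : i' ∈ Finset.univ) => hA0 i' j l) (Finset.mem_univ i)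
    rw [hA1 j l] at this; exact this
  constructor
  · rintro ⟨q, hq, hpq, hqp⟩
    have key : ∀ (r s : Fin N → ℝ), r ∈ stdSimplex ℝ (Fin N) → s ∈ stdSimplex ℝ (Fin N) →
        conv A r s k = 1 → ∀ j l, 0 < r j → 0 < s l → A k j l = 1 := by
      intro r s hr hs hc j l hrj hsl
      have htot : ∑ j, ∑ l, r j * s l = 1 := by
        rw [← Finset.sum_mul_sum, hr.2, hs.2, one_mul]
      have hsum : ∑ j, ∑ l, (1 - A k j l) * (r j * s l) = 0 := by
        have : ∑ j, ∑ l, (1 - A k j l) * (r j * s l)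
            = (∑ j, ∑ l, r j * s l) - ∑ j, ∑ l, A k j l * r j * s l := by
          rw [← Finset.sum_sub_distrib]
          refine Finset.sum_congr rfl fun j _ => ?_
          rw [← Finset.sum_sub_distrib]
          refine Finset.sum_congr rfl fun l _ => by ring
        rw [this, htot]
        have := hc
        simp only [conv] at this
        rw [this]; ring
      have hnn : ∀ j ∈ Finset.univ, ∀ l ∈ Finset.univ, 0 ≤ (1 - A k j l) * (r j * s l) :=
        fun j _ l _ => mul_nonneg (by linarith [hAle k j l]) (mul_nonneg (hr.1 j) (hs.1 l))
      have h1 : ∀ j ∈ (Finset.univ : Finset (Fin N)),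
          ∑ l, (1 - A k j l) * (r j * s l) = 0 := by
        rw [← Finset.sum_eq_zero_iff_of_nonneg
          (fun j _ => Finset.sum_nonneg (fun l _ => hnn j (Finset.mem_univ j) l (Finset.mem_univ l)))]
        exact hsum
      have h2 := (Finset.sum_eq_zero_iff_of_nonneg
        (fun l _ => hnn j (Finset.mem_univ j) l (Finset.mem_univ l))).mp
        (h1 j (Finset.mem_univ j)) l (Finset.mem_univ l)
      have hpos : 0 < r j * s l := mul_pos hrj hsl
      have : 1 - A k j l = 0 := by
        rcases mul_eq_zero.mp h2 with h | h
        · exact h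
        · exact absurd h (ne_of_gt hpos)
      linarith
    -- find supports
    obtain ⟨m, -, hm⟩ : ∃ m ∈ Finset.univ, p m ≠ 0 := by
      apply Finset.exists_ne_zero_of_sum_ne_zero (s := Finset.univ) (f := p)
      rw [hp.2]; norm_num
    obtain ⟨n, -, hn⟩ : ∃ n ∈ Finset.univ, q n ≠ 0 := by
      apply Finset.exists_ne_zero_of_sum_ne_zero (s := Finset.univ) (f := q)
      rw [hq.2]; norm_num
    have hmpos : 0 < p m := lt_of_le_of_ne (hp.1 m) (Ne.symm hm)
    have hnpos : 0 < q n := lt_of_le_of_ne (hq.1 n) (Ne.symm hn)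
    have hpqk : conv A p q k = 1 := by rw [hpq]; simp
    have hqpk : conv A q p k = 1 := by rw [hqp]; simp
    have hAkmn : A k m n = 1 := key p q hp hq hpqk m n hmpos hnpos
    have hAknm : A k n m = 1 := key q p hq hp hqpk n m hnpos hmpos
    have hzero : ∀ i, i ≠ m → p i = 0 := by
      intro i hi
      by_contra hne
      have hipos : 0 < p i := lt_of_le_of_ne (hp.1 i) (Ne.symm hne)
      have hAkin : A k i n = 1 := key p q hp hq hpqk i n hipos hnpos
      have := aux_zero (fun j => A k j n) (fun j => hA0 k j n) (hA2 k n) m i hAkmn hi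
      rw [this] at hAkin; norm_num at hAkin
    refine ⟨m, fun i => ?_, n, hAkmn, hAknm⟩
    by_cases hi : i = m
    · subst hi
      rw [if_pos rfl]
      have h := hp.2
      rw [← Finset.add_sum_erase Finset.univ p (Finset.mem_univ i)] at h
      have : ∑ x ∈ Finset.univ.erase i, p x = 0 :=
        Finset.sum_eq_zero fun x hx => hzero x (Finset.mem_erase.mp hx).1
      linarith
    · rw [if_neg hi]; exact hzero i hi
  · rintro ⟨m, hpm, n, h1, h2⟩
    refine ⟨fun i => if i = n then 1 else 0, ⟨fun i => by dsimp; split <;> norm_num, by simp⟩, ?_, ?_⟩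
    · funext i
      have : conv A p (fun i => if i = n then 1 else 0) i = A i m n := by
        simp [conv, hpm, Finset.mul_sum]
      rw [this]
      by_cases hik : i = k
      · subst hik; rw [if_pos rfl]; exact h1
      · rw [if_neg hik]
        exact aux_zero (fun i => A i m n) (fun i => hA0 i m n) (hA1 m n) k i h1 hik
    · funext i
      have : conv A (fun i => if i = n then 1 else 0) p i = A i n m := by
        simp [conv, hpm, Finset.mul_sum]
      rw [this]
      by_cases hik : i = k
      · subst hik; rw [if_pos rfl]; exact h2
      · rw [if_neg hik]
        exact aux_zero (fun i => A i n m) (fun i => hA0 i n m) (hA1 n m) k i h2 hik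
end

section
/- If an inverse of a probability vector p with respect to the tristochastic product ⋆_A exists (p ⋆_A q = q ⋆_A p = 𝟙_A), then both p and q are standard basis vectors (each has exactly one nonzero entry equal to 1). -/
theorem inverse_implies_basis_vectors {N : ℕ} (A : Fin N → Fin N → Fin N → ℝ)
    (hA : Tristochastic A) (k : Fin N)
    (hid : ∀ p ∈ stdSimplex ℝ (Fin N),
      conv A (fun i => if i = k then 1 else 0) p = p ∧
      conv A p (fun i => if i = k then 1 else 0) = p)
    (p q : Fin N → ℝ)
    (hp : p ∈ stdSimplex ℝ (Fin N)) (hq : q ∈ stdSimplex ℝ (Fin N))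
    (hinv : conv A p q = (fun i => if i = k then 1 else 0) ∧
      conv A q p = (fun i => if i = k then 1 else 0)) :
    (∃ m : Fin N, ∀ i, p i = if i = m then 1 else 0) ∧
    (∃ n : Fin N, ∀ i, q i = if i = n then 1 else 0) := by
  obtain ⟨hp0, hp1⟩ := hp
  obtain ⟨hq0, hq1⟩ := hq
  obtain ⟨hA0, hA1, hA2, hA3⟩ := hA
  -- A k j l ≤ 1
  have hAle : ∀ j l, A k j l ≤ 1 := by
    intro j l
    calc A k j l ≤ ∑ i, A i j l :=
          Finset.single_le_sum (fun i _ => hA0 i j l) (Finset.mem_univ k)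
      _ = 1 := hA1 j l
  -- value of conv at k
  have h1 : ∑ j, ∑ l, A k j l * p j * q l = 1 := by
    have := congrFun hinv.1 k
    simpa [conv] using this
  have h2 : ∑ j, ∑ l, p j * q l = 1 := by
    rw [← Finset.sum_mul_sum, hp1, hq1, one_mul]
  have h3 : ∑ j, ∑ l, (1 - A k j l) * (p j * q l) = 0 := by
    have e : ∀ j l, (1 - A k j l) * (p j * q l) = p j * q l - A k j l * p j * q l := by
      intros; ring
    simp_rw [e, Finset.sum_sub_distrib]
    rw [h1, h2]; ring
  have hterm : ∀ j l, 0 ≤ (1 - A k j l) * (p j * q l) := fun j l =>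
    mul_nonneg (by linarith [hAle j l]) (mul_nonneg (hp0 j) (hq0 l))
  have hkey : ∀ j l, 0 < p j → 0 < q l → A k j l = 1 := by
    intro j l hpj hql
    have houter := (Finset.sum_eq_zero_iff_of_nonneg
      (fun j _ => Finset.sum_nonneg (fun l _ => hterm j l))).mp h3 j (Finset.mem_univ j)
    have hinner := (Finset.sum_eq_zero_iff_of_nonneg
      (fun l _ => hterm j l)).mp houter l (Finset.mem_univ l)
    have hpos : 0 < p j * q l := mul_pos hpj hql
    have : 1 - A k j l = 0 := by
      rcases mul_eq_zero.mp hinner with h | h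
      · exact h
      · exact absurd h (ne_of_gt hpos)
    linarith
  -- p and q have a positive entry
  obtain ⟨m, hm⟩ : ∃ m, 0 < p m := by
    obtain ⟨m, hm⟩ := Finset.exists_ne_zero_of_sum_ne_zero (s := Finset.univ)
      (f := p) (by rw [hp1]; norm_num)
    exact ⟨m, lt_of_le_of_ne (hp0 m) (Ne.symm hm.2)⟩
  obtain ⟨n, hn⟩ : ∃ n, 0 < q n := by
    obtain ⟨n, hn⟩ := Finset.exists_ne_zero_of_sum_ne_zero (s := Finset.univ)
      (f := q) (by rw [hq1]; norm_num)
    exact ⟨n, lt_of_le_of_ne (hq0 n) (Ne.symm hn.2)⟩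
  -- p vanishes off m
  have hpzero : ∀ j, j ≠ m → p j = 0 := by
    intro j hj
    by_contra hpj
    have hpj' : 0 < p j := lt_of_le_of_ne (hp0 j) (Ne.symm hpj)
    have h5 : A k m n = 1 := hkey m n hm hn
    have h6 : A k j n = 1 := hkey j n hpj' hn
    have h7 : (2 : ℝ) ≤ ∑ j', A k j' n := by
      calc (2 : ℝ) = ∑ j' ∈ ({m, j} : Finset (Fin N)), A k j' n := by
            rw [Finset.sum_pair (Ne.symm hj), h5, h6]; norm_num
        _ ≤ ∑ j', A k j' n := Finset.sum_le_sum_of_subset_of_nonneg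
            (Finset.subset_univ _) (fun i _ _ => hA0 k i n)
    rw [hA2 k n] at h7
    linarith
  have hqzero : ∀ l, l ≠ n → q l = 0 := by
    intro l hl
    by_contra hql
    have hql' : 0 < q l := lt_of_le_of_ne (hq0 l) (Ne.symm hql)
    have h5 : A k m n = 1 := hkey m n hm hn
    have h6 : A k m l = 1 := hkey m l hm hql'
    have h7 : (2 : ℝ) ≤ ∑ l', A k m l' := by
      calc (2 : ℝ) = ∑ l' ∈ ({n, l} : Finset (Fin N)), A k m l' := by
            rw [Finset.sum_pair (Ne.symm hl), h5, h6]; norm_num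
        _ ≤ ∑ l', A k m l' := Finset.sum_le_sum_of_subset_of_nonneg
            (Finset.subset_univ _) (fun i _ _ => hA0 k m i)
    rw [hA3 k m] at h7
    linarith
  have hpm : p m = 1 := by
    have := Finset.sum_eq_single_of_mem m (Finset.mem_univ m)
      (fun j _ hj => hpzero j hj)
    rw [this] at hp1; exact hp1
  have hqn : q n = 1 := by
    have := Finset.sum_eq_single_of_mem n (Finset.mem_univ n)
      (fun l _ hl => hqzero l hl)
    rw [this] at hq1; exact hq1
  refine ⟨⟨m, fun i => ?_⟩, ⟨n, fun i => ?_⟩⟩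
  · by_cases h : i = m
    · subst h; simp [hpm]
    · simp [h, hpzero i h]
  · by_cases h : i = n
    · subst h; simp [hqn]
    · simp [h, hqzero i h]
end

section
/- Define for probability vectors p, q in Δ_N the permutation-averaged convolution (p ⋆_r q) = (1/(N−1)!) Σ_{σ ∈ S_N} ⟨p, P_σ r⟩ P_σ^{-1} q, where r is a fixed probability vector and P_σ the permutation matrix of σ. Then e ⋆_r p = e and p ⋆_r e = e for every probability vector p, where e is the uniform vector; consequently the associated cubic tensor is tristochastic. -/
lemma sum_perm_apply {n : ℕ} (i : Fin (n+1)) (f : Fin (n+1) → ℝ) :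
    ∑ σ : Equiv.Perm (Fin (n+1)), f (σ i) = (Nat.factorial n : ℝ) * ∑ k, f k := by
  have h0 : ∑ σ : Equiv.Perm (Fin (n+1)), f (σ i)
      = ∑ σ : Equiv.Perm (Fin (n+1)), f (σ 0) := by
    refine Fintype.sum_equiv (Equiv.mulRight (Equiv.swap (0 : Fin (n+1)) i)) _ _ ?_
    intro σ
    simp [Equiv.Perm.mul_apply]
  rw [h0, ← Equiv.sum_comp (Equiv.Perm.decomposeFin (n := n)).symm
      (fun σ : Equiv.Perm (Fin (n+1)) => f (σ 0))]
  rw [Fintype.sum_prod_type]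
  simp only [Equiv.Perm.decomposeFin_symm_apply_zero]
  simp [Finset.sum_const, Fintype.card_perm, Fintype.card_fin]
  rw [← Finset.mul_sum]

lemma sum_perm_inv_apply {n : ℕ} (j : Fin (n+1)) (f : Fin (n+1) → ℝ) :
    ∑ σ : Equiv.Perm (Fin (n+1)), f (σ⁻¹ j) = (Nat.factorial n : ℝ) * ∑ k, f k := by
  rw [show (∑ σ : Equiv.Perm (Fin (n+1)), f (σ⁻¹ j))
      = ∑ σ : Equiv.Perm (Fin (n+1)), f (σ j) from
    Fintype.sum_equiv (Equiv.inv _) _ _ (fun σ => rfl)]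
  exact sum_perm_apply j f


/-- The permutation-averaged convolution
`(p ⋆_r q) = (1/(N−1)!) Σ_{σ ∈ S_N} ⟨p, P_σ r⟩ P_σ⁻¹ q`,
where `(P_σ x)_i = x_{σ⁻¹ i}`. -/
noncomputable def convR {N : ℕ} (r p q : Fin N → ℝ) : Fin N → ℝ :=
  fun i => (Nat.factorial (N - 1) : ℝ)⁻¹ *
    ∑ σ : Equiv.Perm (Fin N), (∑ j, p j * r (σ⁻¹ j)) * q (σ i)

/-- The cubic tensor associated with the permutation-averaged convolution `convR r`. -/
noncomputable def permTensor {N : ℕ} (r : Fin N → ℝ) (i j k : Fin N) : ℝ :=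
  (Nat.factorial (N - 1) : ℝ)⁻¹ *
    ∑ σ : Equiv.Perm (Fin N), r (σ⁻¹ j) * (if σ i = k then 1 else 0)

theorem convR_uniform_and_tristochastic {N : ℕ} (hN : 0 < N)
    (r : Fin N → ℝ) (hr : r ∈ stdSimplex ℝ (Fin N)) :
    (∀ p ∈ stdSimplex ℝ (Fin N),
        convR r (fun _ => (N : ℝ)⁻¹) p = (fun _ => (N : ℝ)⁻¹) ∧
        convR r p (fun _ => (N : ℝ)⁻¹) = (fun _ => (N : ℝ)⁻¹)) ∧
    (∀ p q : Fin N → ℝ, ∀ i,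
        convR r p q i = ∑ j, ∑ k, permTensor r i j k * p j * q k) ∧
    (∀ i j k, 0 ≤ permTensor r i j k) ∧
    (∀ j k, ∑ i, permTensor r i j k = 1) ∧
    (∀ i k, ∑ j, permTensor r i j k = 1) ∧
    (∀ i j, ∑ k, permTensor r i j k = 1) := by
  obtain ⟨n, rfl⟩ := Nat.exists_eq_succ_of_ne_zero hN.ne'
  have hfac : ((Nat.factorial n : ℝ)) ≠ 0 := by
    exact_mod_cast (Nat.factorial_ne_zero n)
  have hrsum : ∑ x, r x = 1 := hr.2
  have hrinv : ∀ σ : Equiv.Perm (Fin (n+1)), ∑ j, r (σ⁻¹ j) = 1 := by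
    intro σ
    rw [Equiv.sum_comp (σ⁻¹ : Equiv.Perm (Fin (n+1))) r]
    exact hrsum
  refine ⟨?_, ?_, ?_, ?_, ?_, ?_⟩
  · intro p hp
    have hpsum : ∑ x, p x = 1 := hp.2
    constructor
    · funext i
      show (Nat.factorial n : ℝ)⁻¹ *
        ∑ σ : Equiv.Perm (Fin (n+1)),
          (∑ j, ((n+1 : ℕ) : ℝ)⁻¹ * r (σ⁻¹ j)) * p (σ i) = ((n+1 : ℕ) : ℝ)⁻¹
      have h1 : ∀ σ : Equiv.Perm (Fin (n+1)),
          (∑ j, ((n+1 : ℕ) : ℝ)⁻¹ * r (σ⁻¹ j)) * p (σ i)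
            = ((n+1 : ℕ) : ℝ)⁻¹ * p (σ i) := by
        intro σ
        rw [← Finset.mul_sum, hrinv σ, mul_one]
      rw [Finset.sum_congr rfl (fun σ _ => h1 σ), ← Finset.mul_sum,
        sum_perm_apply i p, hpsum, mul_one]
      rw [mul_left_comm, inv_mul_cancel₀ hfac, mul_one]
    · funext i
      show (Nat.factorial n : ℝ)⁻¹ *
        ∑ σ : Equiv.Perm (Fin (n+1)),
          (∑ j, p j * r (σ⁻¹ j)) * ((n+1 : ℕ) : ℝ)⁻¹ = ((n+1 : ℕ) : ℝ)⁻¹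
      rw [← Finset.sum_mul, Finset.sum_comm]
      have h2 : ∀ j : Fin (n+1), ∑ σ : Equiv.Perm (Fin (n+1)), p j * r (σ⁻¹ j)
          = (Nat.factorial n : ℝ) * p j := by
        intro j
        rw [← Finset.mul_sum, sum_perm_inv_apply j r, hrsum, mul_one, mul_comm]
      rw [Finset.sum_congr rfl (fun j _ => h2 j), ← Finset.mul_sum, hpsum, mul_one,
        ← mul_assoc, inv_mul_cancel₀ hfac, one_mul]
  · intro p q i
    show (Nat.factorial n : ℝ)⁻¹ *
        ∑ σ : Equiv.Perm (Fin (n+1)), (∑ j, p j * r (σ⁻¹ j)) * q (σ i)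
      = ∑ j, ∑ k, ((Nat.factorial n : ℝ)⁻¹ *
          ∑ σ : Equiv.Perm (Fin (n+1)), r (σ⁻¹ j) * (if σ i = k then 1 else 0)) * p j * q k
    have hR : ∀ j k : Fin (n+1),
        ((Nat.factorial n : ℝ)⁻¹ *
          ∑ σ : Equiv.Perm (Fin (n+1)), r (σ⁻¹ j) * (if σ i = k then 1 else 0)) * p j * q k
        = (Nat.factorial n : ℝ)⁻¹ *
            ∑ σ : Equiv.Perm (Fin (n+1)),
              r (σ⁻¹ j) * (if σ i = k then 1 else 0) * p j * q k := by
      intro j k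
      rw [mul_assoc, mul_assoc, ← Finset.sum_mul, ← Finset.sum_mul]
      ring_nf
    have hk : ∀ (j : Fin (n+1)) (σ : Equiv.Perm (Fin (n+1))),
        ∑ k, r (σ⁻¹ j) * (if σ i = k then 1 else 0) * p j * q k
          = p j * r (σ⁻¹ j) * q (σ i) := by
      intro j σ
      simp only [mul_ite, ite_mul, mul_one, mul_zero, zero_mul]
      rw [Finset.sum_ite_eq]
      simp only [Finset.mem_univ, if_true]
      ring
    have hRHS : ∀ j : Fin (n+1),
        ∑ k, ∑ σ : Equiv.Perm (Fin (n+1)),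
            r (σ⁻¹ j) * (if σ i = k then 1 else 0) * p j * q k
          = ∑ σ : Equiv.Perm (Fin (n+1)), p j * r (σ⁻¹ j) * q (σ i) := by
      intro j
      rw [Finset.sum_comm]
      exact Finset.sum_congr rfl (fun σ _ => hk j σ)
    simp only [hR, ← Finset.mul_sum]
    congr 1
    calc ∑ σ : Equiv.Perm (Fin (n+1)), (∑ j, p j * r (σ⁻¹ j)) * q (σ i)
        = ∑ σ : Equiv.Perm (Fin (n+1)), ∑ j, p j * r (σ⁻¹ j) * q (σ i) := by
          refine Finset.sum_congr rfl fun σ _ => ?_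
          rw [Finset.sum_mul]
      _ = ∑ j, ∑ σ : Equiv.Perm (Fin (n+1)), p j * r (σ⁻¹ j) * q (σ i) :=
          Finset.sum_comm
      _ = ∑ j, ∑ k, ∑ σ : Equiv.Perm (Fin (n+1)),
            r (σ⁻¹ j) * (if σ i = k then 1 else 0) * p j * q k :=
          Finset.sum_congr rfl fun j _ => (hRHS j).symm
  · intro i j k
    apply mul_nonneg (by positivity)
    apply Finset.sum_nonneg
    intro σ _
    have := hr.1 (σ⁻¹ j)
    positivity
  · intro j k
    show ∑ i, (Nat.factorial n : ℝ)⁻¹ *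
        ∑ σ : Equiv.Perm (Fin (n+1)), r (σ⁻¹ j) * (if σ i = k then 1 else 0) = 1
    rw [← Finset.mul_sum, Finset.sum_comm]
    have h1 : ∀ σ : Equiv.Perm (Fin (n+1)),
        ∑ i, r (σ⁻¹ j) * (if σ i = k then 1 else 0) = r (σ⁻¹ j) := by
      intro σ
      rw [← Finset.mul_sum]
      have h2 : ∑ i, (if σ i = k then (1:ℝ) else 0) = 1 := by
        simp [Equiv.apply_eq_iff_eq_symm_apply, Finset.sum_ite_eq']
      rw [h2, mul_one]
    rw [Finset.sum_congr rfl (fun σ _ => h1 σ), sum_perm_inv_apply j r, hrsum,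
      mul_one, inv_mul_cancel₀ hfac]
  · intro i k
    show ∑ j, (Nat.factorial n : ℝ)⁻¹ *
        ∑ σ : Equiv.Perm (Fin (n+1)), r (σ⁻¹ j) * (if σ i = k then 1 else 0) = 1
    rw [← Finset.mul_sum, Finset.sum_comm]
    have h1 : ∀ σ : Equiv.Perm (Fin (n+1)),
        ∑ j, r (σ⁻¹ j) * (if σ i = k then 1 else 0)
          = (if σ i = k then (1:ℝ) else 0) := by
      intro σ
      rw [← Finset.sum_mul, hrinv σ, one_mul]
    rw [Finset.sum_congr rfl (fun σ _ => h1 σ),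
      sum_perm_apply i (fun x => if x = k then (1:ℝ) else 0)]
    simp [Finset.sum_ite_eq', inv_mul_cancel₀ hfac]
  · intro i j
    show ∑ k, (Nat.factorial n : ℝ)⁻¹ *
        ∑ σ : Equiv.Perm (Fin (n+1)), r (σ⁻¹ j) * (if σ i = k then 1 else 0) = 1
    rw [← Finset.mul_sum, Finset.sum_comm]
    have h1 : ∀ σ : Equiv.Perm (Fin (n+1)),
        ∑ k, r (σ⁻¹ j) * (if σ i = k then 1 else 0) = r (σ⁻¹ j) := by
      intro σ
      rw [← Finset.mul_sum]
      have h2 : ∑ k, (if σ i = k then (1:ℝ) else 0) = 1 := by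
        simp [Finset.sum_ite_eq]
      rw [h2, mul_one]
    rw [Finset.sum_congr rfl (fun σ _ => h1 σ), sum_perm_inv_apply j r, hrsum,
      mul_one, inv_mul_cancel₀ hfac]
end
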